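/- Every subset of ℝ^n with diameter at most 2 is contained in a convex body of constant width 2. -/

import Mathlib

open RealInnerProductSpace

/-- Support function of a set `K` in Euclidean space. -/
noncomputable def suppFn {n : ℕ} (K : Set (EuclideanSpace ℝ (Fin n)))
    (v : EuclideanSpace ℝ (Fin n)) : ℝ :=
  sSup ((fun x => ⟪x, v⟫) '' K)

/-- `K` is a convex body of constant width 2: compact, convex, nonempty interior, and
for every unit direction the distance between the two parallel supporting hyperplanes,
namely `h(v) + h(-v)`, equals 2. -/
def IsConstantWidthTwoBody {n : ℕ} (K : Set (EuclideanSpace ℝ (Fin n))) : Prop :=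
  IsCompact K ∧ Convex ℝ K ∧ (interior K).Nonempty ∧
    ∀ v : EuclideanSpace ℝ (Fin n), ‖v‖ = 1 → suppFn K v + suppFn K (-v) = 2

/-!
For `r > 0` write `A^r = ⋂ a ∈ A, closedBall a r`; then `A ⊆ A^rr`, `A^rrr = A^r`, and
`A ⊆ A^r` when `A` has diameter at most `r`. Let `b` minimise `⟪·, v⟫` on `A^rr`, `‖v‖ = 1`.
For `k ∈ A^rr`, moving from `b` a fraction `t` towards `k` and then back by
`t (1 - t) ‖k - b‖² / (2r)` along `v` stays in `A^rr` (this is the strong convexity of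
`‖·‖²`), so minimality and `t → 0` give `‖k - b‖² ≤ 2r ⟪k - b, v⟫`, i.e. `‖k - (b + r v)‖ ≤ r`.
Thus `b + r v ∈ A^rrr = A^r`, whence `h_{A^r}(v) + h_{A^rr}(-v) = r` for the support
functions, and the Minkowski average `(A^r + A^rr) / 2 ⊇ A` has constant width `r`.
A convex set of positive width in every direction has nonempty interior.
-/

open Metric Filter Topology
open scoped Pointwise

/-- The spherical intersection `A^r`. -/
def ballInter {X : Type*} [PseudoMetricSpace X] (r : ℝ) (A : Set X) : Set X :=
  ⋂ x ∈ A, closedBall x r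

section PseudoMetricSpace

variable {X : Type*} [PseudoMetricSpace X] {r : ℝ} {A B : Set X} {z : X}

theorem mem_ballInter : z ∈ ballInter r A ↔ ∀ x ∈ A, dist z x ≤ r := by
  simp [ballInter]

theorem ballInter_anti (h : A ⊆ B) : ballInter r B ⊆ ballInter r A :=
  fun _ hz => mem_ballInter.2 fun x hx => mem_ballInter.1 hz x (h hx)

theorem subset_ballInter_ballInter : A ⊆ ballInter r (ballInter r A) :=
  fun a ha => mem_ballInter.2 fun y hy => dist_comm a y ▸ mem_ballInter.1 hy a ha

theorem ballInter_ballInter_ballInter :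
    ballInter r (ballInter r (ballInter r A)) = ballInter r A :=
  (ballInter_anti subset_ballInter_ballInter).antisymm subset_ballInter_ballInter

theorem subset_ballInter (hA : ∀ x ∈ A, ∀ y ∈ A, dist x y ≤ r) : A ⊆ ballInter r A :=
  fun x hx => mem_ballInter.2 (hA x hx)

theorem isClosed_ballInter : IsClosed (ballInter r A) :=
  isClosed_biInter fun _ _ => isClosed_closedBall

theorem isCompact_ballInter [ProperSpace X] (hA : A.Nonempty) : IsCompact (ballInter r A) := by
  obtain ⟨a, ha⟩ := hA
  exact isCompact_of_isClosed_isBounded isClosed_ballInter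
    (isBounded_closedBall.subset fun z hz => mem_closedBall.2 (mem_ballInter.1 hz a ha))

end PseudoMetricSpace

theorem convex_ballInter {E : Type*} [SeminormedAddCommGroup E] [NormedSpace ℝ E] (r : ℝ)
    (A : Set E) : Convex ℝ (ballInter r A) :=
  convex_iInter₂ fun x _ => convex_closedBall x r

section InnerProductSpace

variable {E : Type*} [NormedAddCommGroup E] [InnerProductSpace ℝ E]

theorem norm_sub_smul_add_smul_sq (t : ℝ) (x y : E) :
    ‖(1 - t) • x + t • y‖ ^ 2 = (1 - t) * ‖x‖ ^ 2 + t * ‖y‖ ^ 2 - t * (1 - t) * ‖x - y‖ ^ 2 := by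
  rw [norm_add_sq_real, norm_sub_sq_real, norm_smul, norm_smul, real_inner_smul_left,
    real_inner_smul_right, mul_pow, mul_pow, Real.norm_eq_abs, Real.norm_eq_abs, sq_abs, sq_abs]
  ring

variable {r t : ℝ} {A : Set E} {b k v : E}

theorem smul_add_smul_sub_smul_mem_ballInter (hr : 0 < r) (hv : ‖v‖ = 1)
    (hb : b ∈ ballInter r A) (hk : k ∈ ballInter r A) (ht₀ : 0 ≤ t) (ht₁ : t ≤ 1) :
    (1 - t) • b + t • k - (t * (1 - t) * ‖k - b‖ ^ 2 / (2 * r)) • v ∈ ballInter r A := by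
  set s := t * (1 - t) * ‖k - b‖ ^ 2 / (2 * r) with hs
  have hs₀ : 0 ≤ s :=
    div_nonneg (mul_nonneg (mul_nonneg ht₀ (sub_nonneg.2 ht₁)) (sq_nonneg _)) (by positivity)
  refine mem_ballInter.2 fun y hy => ?_
  have hby : ‖b - y‖ ≤ r := by simpa [dist_eq_norm] using mem_ballInter.1 hb y hy
  have hky : ‖k - y‖ ≤ r := by simpa [dist_eq_norm] using mem_ballInter.1 hk y hy
  set w := (1 - t) • (b - y) + t • (k - y)
  have hw_sq : ‖w‖ ^ 2 ≤ r ^ 2 - 2 * r * s := by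
    have h2rs : 2 * r * s = t * (1 - t) * ‖k - b‖ ^ 2 := by rw [hs]; field_simp
    rw [norm_sub_smul_add_smul_sq, sub_sub_sub_cancel_right, norm_sub_rev b k, h2rs]
    have hby' := mul_le_mul_of_nonneg_left (pow_le_pow_left₀ (norm_nonneg _) hby 2)
      (sub_nonneg.2 ht₁)
    have hky' := mul_le_mul_of_nonneg_left (pow_le_pow_left₀ (norm_nonneg _) hky 2) ht₀
    linarith
  have hsr : 2 * s ≤ r := by nlinarith [sq_nonneg ‖w‖]
  have hw : ‖w‖ ≤ r - s := by nlinarith [norm_nonneg w]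
  calc dist ((1 - t) • b + t • k - s • v) y = ‖w - s • v‖ := by
        rw [dist_eq_norm]; congr 1; simp only [w, smul_sub]; module
    _ ≤ ‖w‖ + ‖s • v‖ := norm_sub_le _ _
    _ ≤ r := by rw [norm_smul, hv, Real.norm_of_nonneg hs₀]; linarith

theorem norm_sub_sq_le_of_isMinOn (hr : 0 < r) (hv : ‖v‖ = 1) (hb : b ∈ ballInter r A)
    (hmin : IsMinOn (fun x => ⟪x, v⟫) (ballInter r A) b) (hk : k ∈ ballInter r A) :
    ‖k - b‖ ^ 2 ≤ 2 * r * ⟪k - b, v⟫ := by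
  have hlens : ∀ t ∈ Set.Ioo (0 : ℝ) 1, (1 - t) * ‖k - b‖ ^ 2 ≤ 2 * r * ⟪k - b, v⟫ := by
    rintro t ⟨ht₀, ht₁⟩
    have h := isMinOn_iff.1 hmin _
      (smul_add_smul_sub_smul_mem_ballInter hr hv hb hk ht₀.le ht₁.le)
    simp only [inner_sub_left, inner_add_left, real_inner_smul_left,
      real_inner_self_eq_norm_sq, hv] at h
    have h' : t * (1 - t) * ‖k - b‖ ^ 2 / (2 * r) ≤ t * ⟪k - b, v⟫ := by
      rw [inner_sub_left]; linarith
    rw [div_le_iff₀ (by positivity)] at h'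
    exact le_of_mul_le_mul_left (by linarith) ht₀
  have hlim : Tendsto (fun t : ℝ => (1 - t) * ‖k - b‖ ^ 2) (𝓝[>] 0) (𝓝 (‖k - b‖ ^ 2)) := by
    have : Continuous fun t : ℝ => (1 - t) * ‖k - b‖ ^ 2 := by fun_prop
    simpa using (this.tendsto 0).mono_left nhdsWithin_le_nhds
  refine le_of_tendsto hlim ?_
  filter_upwards [Ioo_mem_nhdsGT zero_lt_one] using hlens

theorem add_smul_mem_ballInter_ballInter_of_isMinOn (hr : 0 < r) (hv : ‖v‖ = 1)
    (hb : b ∈ ballInter r A) (hmin : IsMinOn (fun x => ⟪x, v⟫) (ballInter r A) b) :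
    b + r • v ∈ ballInter r (ballInter r A) := by
  refine mem_ballInter.2 fun k hk => ?_
  have hsq : ‖k - b - r • v‖ ^ 2 ≤ r ^ 2 := by
    rw [norm_sub_sq_real, norm_smul, real_inner_smul_right, hv, Real.norm_of_nonneg hr.le]
    linarith [norm_sub_sq_le_of_isMinOn hr hv hb hmin hk]
  rw [dist_comm, dist_eq_norm, ← sub_sub]
  exact (pow_le_pow_iff_left₀ (norm_nonneg _) hr.le two_ne_zero).1 hsq

theorem Convex.exists_forall_inner_eq_of_interior_eq_empty [FiniteDimensional ℝ E] {K : Set E}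
    (hK : Convex ℝ K) (hne : K.Nonempty) (hint : interior K = ∅) :
    ∃ u : E, ‖u‖ = 1 ∧ ∃ c, ∀ x ∈ K, ⟪x, u⟫ = c := by
  obtain ⟨x₀, hx₀⟩ := hne
  have hspan : affineSpan ℝ K ≠ ⊤ := fun h =>
    (hK.interior_nonempty_iff_affineSpan_eq_top.2 h).ne_empty hint
  have hdir : (affineSpan ℝ K).direction ≠ ⊤ := fun h =>
    hspan ((AffineSubspace.direction_eq_top_iff_of_nonempty ⟨x₀, subset_affineSpan ℝ K hx₀⟩).1 h)
  obtain ⟨u, hu, hu₀⟩ := (Submodule.ne_bot_iff _).1 (mt Submodule.orthogonal_eq_bot_iff.1 hdir)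
  refine ⟨‖u‖⁻¹ • u, norm_smul_inv_norm hu₀, ⟪x₀, ‖u‖⁻¹ • u⟫, fun x hx => ?_⟩
  have hx : x - x₀ ∈ (affineSpan ℝ K).direction :=
    AffineSubspace.vsub_mem_direction (subset_affineSpan ℝ K hx) (subset_affineSpan ℝ K hx₀)
  have h := Submodule.inner_right_of_mem_orthogonal hx (Submodule.smul_mem _ ‖u‖⁻¹ hu)
  rw [inner_sub_left] at h
  linarith

end InnerProductSpace

section SupportFunction

variable {n : ℕ} {K P Q A : Set (EuclideanSpace ℝ (Fin n))} {v x : EuclideanSpace ℝ (Fin n)}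
  {c r : ℝ}

theorem le_suppFn (hK : IsCompact K) (hx : x ∈ K) : ⟪x, v⟫ ≤ suppFn K v :=
  le_csSup (hK.image (continuous_id.inner continuous_const)).bddAbove ⟨x, hx, rfl⟩

theorem suppFn_le (hK : K.Nonempty) (h : ∀ x ∈ K, ⟪x, v⟫ ≤ c) : suppFn K v ≤ c :=
  csSup_le (hK.image _) (Set.forall_mem_image.2 h)

theorem suppFn_eq_of_forall_inner_eq (hK : K.Nonempty) (h : ∀ x ∈ K, ⟪x, v⟫ = c) :
    suppFn K v = c := by
  obtain ⟨x, hx⟩ := hK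
  refine (suppFn_le ⟨x, hx⟩ fun y hy => (h y hy).le).antisymm ?_
  exact h x hx ▸ le_csSup ⟨c, Set.forall_mem_image.2 fun y hy => (h y hy).le⟩ ⟨x, hx, rfl⟩

theorem suppFn_add (hP : IsCompact P) (hP' : P.Nonempty) (hQ : IsCompact Q) (hQ' : Q.Nonempty) :
    suppFn (P + Q) v = suppFn P v + suppFn Q v := by
  have hv : (fun x => ⟪x, v⟫) = innerSL ℝ v := funext fun x => real_inner_comm _ _
  have hc : Continuous (innerSL ℝ v) := (innerSL ℝ v).continuous
  simp only [suppFn, hv, Set.image_add]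
  exact csSup_add (hP'.image _) (hP.image hc).bddAbove (hQ'.image _) (hQ.image hc).bddAbove

theorem suppFn_smul (hc : 0 ≤ c) : suppFn (c • K) v = c * suppFn K v := by
  have hv : (fun x => ⟪x, v⟫) = innerSL ℝ v := funext fun x => real_inner_comm _ _
  simp only [suppFn, hv, image_smul_set, Real.sSup_smul_of_nonneg hc, smul_eq_mul]

theorem suppFn_ballInter_add_suppFn_ballInter_ballInter_neg (hr : 0 < r) (hA : A.Nonempty)
    (hP : (ballInter r A).Nonempty) (hv : ‖v‖ = 1) :
    suppFn (ballInter r A) v + suppFn (ballInter r (ballInter r A)) (-v) = r := by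
  set P := ballInter r A
  set Q := ballInter r P
  have hQ : IsCompact Q := isCompact_ballInter hP
  have hQne : Q.Nonempty := hA.mono subset_ballInter_ballInter
  obtain ⟨b, hbQ, hmin⟩ :=
    hQ.exists_isMinOn hQne (continuous_id.inner continuous_const).continuousOn (f := (⟪·, v⟫))
  have hQv : suppFn Q (-v) = -⟪b, v⟫ := by
    refine (suppFn_le hQne fun x hx => ?_).antisymm ?_
    · simpa [inner_neg_right] using isMinOn_iff.1 hmin x hx
    · simpa [inner_neg_right] using le_suppFn hQ hbQ (v := -v)
  have hPv : suppFn P v = ⟪b, v⟫ + r := by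
    refine (suppFn_le hP fun p hp => ?_).antisymm ?_
    · have hpb := real_inner_le_norm (p - b) v
      have hpb' : ‖p - b‖ ≤ r := by
        rw [← dist_eq_norm, dist_comm]; exact mem_ballInter.1 hbQ p hp
      rw [inner_sub_left, hv, mul_one] at hpb
      linarith
    · have hbr := add_smul_mem_ballInter_ballInter_of_isMinOn hr hv hbQ hmin
      rw [ballInter_ballInter_ballInter] at hbr
      have h := le_suppFn (isCompact_ballInter hA) hbr (v := v)
      rwa [inner_add_left, real_inner_smul_left, real_inner_self_eq_norm_sq, hv, one_pow,
        mul_one] at h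
  rw [hPv, hQv]
  ring

end SupportFunction

section Completion

def ballInterCompletion {E : Type*} [SeminormedAddCommGroup E] [NormedSpace ℝ E] (r : ℝ)
    (A : Set E) : Set E :=
  (2⁻¹ : ℝ) • (ballInter r A + ballInter r (ballInter r A))

variable {E : Type*} [NormedAddCommGroup E] [NormedSpace ℝ E] {r : ℝ} {A : Set E}

theorem subset_ballInterCompletion (hAr : ∀ x ∈ A, ∀ y ∈ A, dist x y ≤ r) :
    A ⊆ ballInterCompletion r A := fun x hx =>
  ⟨x + x, Set.add_mem_add (subset_ballInter hAr hx) (subset_ballInter_ballInter hx), by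
    show (2⁻¹ : ℝ) • (x + x) = x
    rw [← two_smul ℝ, inv_smul_smul₀ two_ne_zero]⟩

theorem convex_ballInterCompletion (r : ℝ) (A : Set E) : Convex ℝ (ballInterCompletion r A) :=
  ((convex_ballInter r A).add (convex_ballInter r _)).smul _

theorem isCompact_ballInterCompletion [ProperSpace E] (hA : A.Nonempty)
    (hAr : ∀ x ∈ A, ∀ y ∈ A, dist x y ≤ r) : IsCompact (ballInterCompletion r A) :=
  ((isCompact_ballInter hA).add (isCompact_ballInter (hA.mono (subset_ballInter hAr)))).smul _

end Completion

theorem suppFn_ballInterCompletion_add_suppFn_neg {n : ℕ} {r : ℝ}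
    {A : Set (EuclideanSpace ℝ (Fin n))} {v : EuclideanSpace ℝ (Fin n)} (hr : 0 < r)
    (hA : A.Nonempty) (hAr : ∀ x ∈ A, ∀ y ∈ A, dist x y ≤ r) (hv : ‖v‖ = 1) :
    suppFn (ballInterCompletion r A) v + suppFn (ballInterCompletion r A) (-v) = r := by
  have hP := hA.mono (subset_ballInter hAr)
  have hQ := hA.mono (subset_ballInter_ballInter (r := r))
  have hPQ {w} : suppFn (ballInterCompletion r A) w =
      2⁻¹ * (suppFn (ballInter r A) w + suppFn (ballInter r (ballInter r A)) w) := by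
    rw [ballInterCompletion, suppFn_smul (by norm_num),
      suppFn_add (isCompact_ballInter hA) hP (isCompact_ballInter hP) hQ]
  have h₁ := suppFn_ballInter_add_suppFn_ballInter_ballInter_neg hr hA hP hv
  have h₂ := suppFn_ballInter_add_suppFn_ballInter_ballInter_neg hr hA hP
    (v := -v) (by rwa [norm_neg])
  rw [neg_neg] at h₂
  rw [hPQ, hPQ]
  linarith

theorem Convex.interior_nonempty_of_suppFn_add_suppFn_neg_ne_zero {n : ℕ}
    {K : Set (EuclideanSpace ℝ (Fin n))} (hK : Convex ℝ K) (hne : K.Nonempty)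
    (hw : ∀ v : EuclideanSpace ℝ (Fin n), ‖v‖ = 1 → suppFn K v + suppFn K (-v) ≠ 0) :
    (interior K).Nonempty := by
  by_contra hint
  obtain ⟨u, hu, c, hc⟩ :=
    hK.exists_forall_inner_eq_of_interior_eq_empty hne (Set.not_nonempty_iff_eq_empty.1 hint)
  refine hw u hu ?_
  rw [suppFn_eq_of_forall_inner_eq hne hc,
    suppFn_eq_of_forall_inner_eq hne (c := -c) fun x hx => by rw [inner_neg_right, hc x hx]]
  ring

theorem diam_le_two_subset_constant_width {n : ℕ} (S : Set (EuclideanSpace ℝ (Fin n)))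
    (hS : ∀ x ∈ S, ∀ y ∈ S, dist x y ≤ 2) :
    ∃ K : Set (EuclideanSpace ℝ (Fin n)), IsConstantWidthTwoBody K ∧ S ⊆ K := by
  obtain ⟨A, hA, hAr, hSA⟩ : ∃ A : Set (EuclideanSpace ℝ (Fin n)),
      A.Nonempty ∧ (∀ x ∈ A, ∀ y ∈ A, dist x y ≤ 2) ∧ S ⊆ A := by
    rcases S.eq_empty_or_nonempty with rfl | hS'
    · exact ⟨{0}, Set.singleton_nonempty 0, by simp, Set.empty_subset _⟩
    · exact ⟨S, hS', hS, subset_rfl⟩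
  have hconv := convex_ballInterCompletion 2 A
  have hwidth {v : EuclideanSpace ℝ (Fin n)} (hv : ‖v‖ = 1) :=
    suppFn_ballInterCompletion_add_suppFn_neg two_pos hA hAr hv
  have hint := hconv.interior_nonempty_of_suppFn_add_suppFn_neg_ne_zero
    (hA.mono (subset_ballInterCompletion hAr)) fun v hv => by rw [hwidth hv]; norm_num
  exact ⟨ballInterCompletion 2 A, ⟨isCompact_ballInterCompletion hA hAr, hconv, hint,
    fun v hv => hwidth hv⟩, hSA.trans (subset_ballInterCompletion hAr)⟩
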